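/- There exists a bijection between the set B(m,n;k) of contained k-Naples (m,n)-parking functions and the set PF(m,n) of classical (m,n)-parking functions, for all 1 ≤ m ≤ n and 0 ≤ k ≤ n-1. In particular |B(m,n;k)| = (n-m+1)(n+1)^{m-1}. -/

import Mathlib

/-!
Close the street into a circle `ZMod (n + 1)` by one extra spot `0`, and let each car search
circularly: first `p`, then `p - 1, …, p - k`, then `p + 1, p + 2, …`. A car breaks the
contained `k`-Naples rule or fails to park exactly when this circular search reaches spot `0`,
so `B(m,n;k)` corresponds to the preference sequences in `ZMod (n + 1)` that leave `0` empty.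
The circular process commutes with rotations and leaves exactly `n + 1 - m` spots empty, so by
Pollak's rotation argument a fraction `(n + 1 - m) / (n + 1)` of all `(n + 1) ^ m` sequences
leave `0` empty, whatever `k` is. As `PF(m,n) = B(m,n;0)`, the two sets have the same size.
-/

/-- The first unoccupied spot `s` with `p ≤ s ≤ n`, if any. -/
def forwardSpot (n : ℕ) (occ : Finset ℕ) (p : ℕ) : Option ℕ :=
  (List.range' p (n + 1 - p)).find? (fun s => decide (s ∉ occ))

/-- Classical (forward-only) parking process: cars park one by one, each at the
first free spot `≥` its preference; returns the final occupied set if all park. -/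
def classicalPark (n : ℕ) : List ℕ → Finset ℕ → Option (Finset ℕ)
  | [], occ => some occ
  | p :: rest, occ =>
    match forwardSpot n occ p with
    | none => none
    | some s => classicalPark n rest (insert s occ)

/-- Backward candidates `p-1, p-2, …, p-k` that are at least `1`. -/
def backwardCandidates (k p : ℕ) : List ℕ :=
  ((List.range k).map (fun i => p - (i + 1))).filter (fun s => decide (1 ≤ s))

/-- The spot where a car with preference `p` parks under the `k`-Naples rule. -/
def naplesSpot (n k : ℕ) (occ : Finset ℕ) (p : ℕ) : Option ℕ :=
  if p ∈ occ then
    match (backwardCandidates k p).find? (fun s => decide (s ∉ occ)) with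
    | some s => some s
    | none => forwardSpot n occ p
  else some p

/-- `k`-Naples parking process; returns the final occupied set if all cars park. -/
def naplesPark (n k : ℕ) : List ℕ → Finset ℕ → Option (Finset ℕ)
  | [], occ => some occ
  | p :: rest, occ =>
    match naplesSpot n k occ p with
    | none => none
    | some s => naplesPark n k rest (insert s occ)

/-- All cars park under the `k`-Naples rule and no car with preference `p ≤ k`
finds all of `1, …, p` occupied (no car exits the lot searching backward). -/
def naplesContainedAux (n k : ℕ) : List ℕ → Finset ℕ → Bool
  | [], _ => true
  | p :: rest, occ =>
    (decide (p ≤ k → ¬ Finset.Icc 1 p ⊆ occ)) &&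
    match naplesSpot n k occ p with
    | none => false
    | some s => naplesContainedAux n k rest (insert s occ)

/-- The (1-based) preference list of `a : Fin m → Fin n`. -/
def prefList {m n : ℕ} (a : Fin m → Fin n) : List ℕ :=
  (List.ofFn a).map (fun x => (x : ℕ) + 1)

/-- The set of classical `(m,n)`-parking functions. -/
def PFset (m n : ℕ) : Finset (Fin m → Fin n) :=
  Finset.univ.filter (fun a => (classicalPark n (prefList a) ∅).isSome)

/-- The set of `k`-Naples `(m,n)`-parking functions. -/
def NPFset (m n k : ℕ) : Finset (Fin m → Fin n) :=
  Finset.univ.filter (fun a => (naplesPark n k (prefList a) ∅).isSome)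

/-- The set of contained `k`-Naples `(m,n)`-parking functions. -/
def Bset (m n k : ℕ) : Finset (Fin m → Fin n) :=
  Finset.univ.filter (fun a => naplesContainedAux n k (prefList a) ∅)

/-- The set of `k`-left obstructed `(m,n)`-parking functions: `m` cars on
`n + k` spots whose first `k` spots are obstructed, forward-only rule. -/
def LPFset (m n k : ℕ) : Finset (Fin m → Fin (n + k)) :=
  Finset.univ.filter (fun a => (classicalPark (n + k) (prefList a) (Finset.Icc 1 k)).isSome)

open Finset

lemma card_filter_zero_notMem_mul_card {G ι : Type*} [AddGroup G] [Fintype G] [DecidableEq G]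
    [Fintype ι] [DecidableEq ι] (R : (ι → G) → Finset G) {r : ℕ}
    (hR : ∀ f c, R (fun i => f i + c) = (R f).image (· + c)) (hcard : ∀ f, #(R f) = r) :
    #{f | (0 : G) ∉ R f} * Fintype.card G =
      (Fintype.card G - r) * Fintype.card G ^ Fintype.card ι := by
  have hfibre (c : G) : #{f | c ∉ R f} = #{f | (0 : G) ∉ R f} := by
    refine (card_equiv (Equiv.addRight fun _ => c) fun f => ?_).symm
    simp [Pi.add_def, hR f c]
  have hcofibre (f : ι → G) : #{c | c ∉ R f} = Fintype.card G - r := by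
    rw [filter_not, filter_mem_eq_inter, univ_inter, card_sdiff_of_subset (subset_univ _), hcard,
      card_univ]
  have := sum_card_bipartiteAbove_eq_sum_card_bipartiteBelow (s := univ) (t := univ)
    (fun (f : ι → G) (c : G) => c ∉ R f)
  simp only [bipartiteAbove, bipartiteBelow, hfibre, hcofibre, sum_const, card_univ,
    Fintype.card_fun, smul_eq_mul] at this
  rw [mul_comm, ← this, mul_comm]

def circList (n k : ℕ) (p : ZMod (n + 1)) : List (ZMod (n + 1)) :=
  p :: ((List.range k).map (fun i => p - (i + 1 : ℕ)) ++
    (List.range n).map (fun i => p + (i + 1 : ℕ)))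

/-- If every spot is taken the car stays at `p`, which changes nothing. -/
def circSpot (n k : ℕ) (occ : Finset (ZMod (n + 1))) (p : ZMod (n + 1)) : ZMod (n + 1) :=
  ((circList n k p).find? (fun s => decide (s ∉ occ))).getD p

def circRun (n k : ℕ) : List (ZMod (n + 1)) → Finset (ZMod (n + 1)) → Finset (ZMod (n + 1))
  | [], occ => occ
  | p :: rest, occ => circRun n k rest (insert (circSpot n k occ p) occ)

section Circular

variable {n k : ℕ}

lemma mem_circList (p x : ZMod (n + 1)) : x ∈ circList n k p := by
  obtain rfl | hxp := eq_or_ne x p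
  · exact List.mem_cons_self
  have hval : (x - p).val ≠ 0 := by simpa [ZMod.val_eq_zero, sub_eq_zero] using hxp
  refine List.mem_cons_of_mem _
    (List.mem_append_right _ (List.mem_map.2 ⟨(x - p).val - 1, ?_, ?_⟩))
  · have := ZMod.val_lt (x - p)
    rw [List.mem_range]; omega
  · rw [Nat.sub_add_cancel (Nat.one_le_iff_ne_zero.2 hval), ZMod.natCast_zmod_val]
    ring

lemma circSpot_of_notMem {occ : Finset (ZMod (n + 1))} {p : ZMod (n + 1)} (hp : p ∉ occ) :
    circSpot n k occ p = p := by
  simp [circSpot, circList, hp]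

lemma circSpot_notMem {occ : Finset (ZMod (n + 1))} {x : ZMod (n + 1)} (hx : x ∉ occ)
    (p : ZMod (n + 1)) : circSpot n k occ p ∉ occ := by
  have hsome : ((circList n k p).find? (fun s => decide (s ∉ occ))).isSome :=
    List.find?_isSome.2 ⟨x, mem_circList p x, decide_eq_true hx⟩
  obtain ⟨s, hs⟩ := Option.isSome_iff_exists.1 hsome
  rw [circSpot, hs, Option.getD_some]
  simpa using List.find?_some hs

lemma circList_add (p c : ZMod (n + 1)) :
    circList n k (p + c) = (circList n k p).map (· + c) := by
  simp only [circList, List.map_cons, List.map_append, List.map_map]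
  congr 2 <;> exact List.map_congr_left fun i _ => by simp only [Function.comp_apply]; ring

lemma circSpot_add (occ : Finset (ZMod (n + 1))) (p c : ZMod (n + 1)) :
    circSpot n k (occ.image (· + c)) (p + c) = circSpot n k occ p + c := by
  simp only [circSpot, circList_add, List.find?_map]
  have hfree : ((fun s => decide (s ∉ occ.image (· + c))) ∘ (· + c)) =
      fun s => decide (s ∉ occ) := by
    funext s; simp
  rw [hfree]
  cases (circList n k p).find? (fun s => decide (s ∉ occ)) <;> rfl

lemma circRun_add (l : List (ZMod (n + 1))) (occ : Finset (ZMod (n + 1))) (c : ZMod (n + 1)) :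
    circRun n k (l.map (· + c)) (occ.image (· + c)) = (circRun n k l occ).image (· + c) := by
  induction l generalizing occ with
  | nil => rfl
  | cons p rest ih => rw [List.map_cons, circRun, circRun, ← ih, image_insert, circSpot_add]

lemma subset_circRun (l : List (ZMod (n + 1))) (occ : Finset (ZMod (n + 1))) :
    occ ⊆ circRun n k l occ := by
  induction l generalizing occ with
  | nil => exact Subset.refl _
  | cons p rest ih => exact (subset_insert _ _).trans (ih _)

lemma mem_circRun_of_mem {l : List (ZMod (n + 1))} {p : ZMod (n + 1)} (hp : p ∈ l)
    (occ : Finset (ZMod (n + 1))) : p ∈ circRun n k l occ := by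
  induction l generalizing occ with
  | nil => simp at hp
  | cons q rest ih =>
    obtain rfl | hp := List.mem_cons.1 hp
    · refine subset_circRun rest _ ?_
      by_cases hq : p ∈ occ
      · exact mem_insert_of_mem hq
      · rw [circSpot_of_notMem hq]; exact mem_insert_self _ _
    · exact ih hp _

lemma card_circRun (l : List (ZMod (n + 1))) (occ : Finset (ZMod (n + 1)))
    (h : #occ + l.length ≤ n + 1) : #(circRun n k l occ) = #occ + l.length := by
  induction l generalizing occ with
  | nil => rfl
  | cons p rest ih =>
    simp only [List.length_cons] at h
    obtain ⟨x, -, hx⟩ := exists_mem_notMem_of_card_lt_card (s := occ) (t := univ)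
      (by rw [card_univ, ZMod.card]; omega)
    have hcard := card_insert_of_notMem (circSpot_notMem (k := k) hx p)
    rw [circRun, ih _ (by omega), hcard, List.length_cons]
    omega

end Circular

/-- The spot taken by a car under the contained `k`-Naples rule; `none` if it has to leave. -/
def containedStep (n k : ℕ) (occ : Finset ℕ) (p : ℕ) : Option ℕ :=
  if p ≤ k ∧ Icc 1 p ⊆ occ then none else naplesSpot n k occ p

lemma backwardCandidates_eq (k p : ℕ) :
    backwardCandidates k p = (List.range (min k (p - 1))).map fun i => p - (i + 1) := by
  obtain ⟨j, hj⟩ : ∃ j, k = min k (p - 1) + j := ⟨k - min k (p - 1), by omega⟩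
  conv_lhs => rw [backwardCandidates, hj]
  rw [List.range_add, List.map_append, List.filter_append, List.filter_eq_self.2,
    List.filter_eq_nil_iff.2, List.append_nil]
  all_goals simp only [List.mem_map, List.mem_range, decide_eq_true_eq]
  all_goals rintro _ ⟨i, hi, rfl⟩; omega

lemma mem_backwardCandidates {k p s : ℕ} :
    s ∈ backwardCandidates k p ↔ 1 ≤ s ∧ s < p ∧ p ≤ s + k := by
  simp only [backwardCandidates, List.mem_filter, List.mem_map, List.mem_range, decide_eq_true_eq]
  constructor
  · rintro ⟨⟨i, hi, rfl⟩, hs⟩; omega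
  · rintro ⟨h₁, h₂, h₃⟩; exact ⟨⟨p - s - 1, by omega, by omega⟩, h₁⟩

section Linear

variable {n k : ℕ}

lemma naplesContainedAux_cons (p : ℕ) (rest : List ℕ) (occ : Finset ℕ) :
    naplesContainedAux n k (p :: rest) occ =
      ((containedStep n k occ p).map fun s =>
        naplesContainedAux n k rest (insert s occ)).getD false := by
  unfold containedStep
  by_cases h : p ≤ k ∧ Icc 1 p ⊆ occ
  · simp [naplesContainedAux, h]
  · rw [naplesContainedAux, if_neg h, decide_eq_true (not_and.1 h), Bool.true_and]
    cases naplesSpot n k occ p <;> rfl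

lemma mem_Icc_of_forwardSpot_eq_some {occ : Finset ℕ} {p s : ℕ}
    (h : forwardSpot n occ p = some s) : s ∈ Icc p n := by
  have := List.mem_of_find?_eq_some h
  rw [List.mem_range'_1] at this
  rw [mem_Icc]
  omega

lemma containedStep_mem_Icc {occ : Finset ℕ} {p s : ℕ} (hp : p ∈ Icc 1 n)
    (h : containedStep n k occ p = some s) : s ∈ Icc 1 n := by
  rw [mem_Icc] at hp ⊢
  unfold containedStep naplesSpot at h
  split_ifs at h with _ hpocc
  · split at h
    · cases h
      have := mem_backwardCandidates.1 (List.mem_of_find?_eq_some ‹_›)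
      omega
    · have := mem_Icc.1 (mem_Icc_of_forwardSpot_eq_some h)
      omega
  · cases h; exact hp

end Linear

section CastToCircle

variable {n k : ℕ} {occ : Finset ℕ}

lemma natCast_mem_image_natCast_iff (hocc : occ ⊆ Icc 1 n) {q : ℕ} (hq : q ≤ n) :
    (q : ZMod (n + 1)) ∈ occ.image Nat.cast ↔ q ∈ occ := by
  refine ⟨fun h => ?_, mem_image_of_mem _⟩
  obtain ⟨r, hr, hrq⟩ := mem_image.1 h
  have hrn := (mem_Icc.1 (hocc hr)).2
  rw [ZMod.natCast_eq_natCast_iff', Nat.mod_eq_of_lt (by omega),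
    Nat.mod_eq_of_lt (by omega)] at hrq
  rwa [← hrq]

lemma zero_notMem_image_natCast (hocc : occ ⊆ Icc 1 n) :
    (0 : ZMod (n + 1)) ∉ occ.image Nat.cast := by
  rw [← Nat.cast_zero, natCast_mem_image_natCast_iff hocc (Nat.zero_le n)]
  exact fun h => by simpa using hocc h

lemma find?_map_natCast (hocc : occ ⊆ Icc 1 n) {l : List ℕ} (hl : ∀ q ∈ l, q ≤ n) :
    (l.map (Nat.cast : ℕ → ZMod (n + 1))).find? (fun s => decide (s ∉ occ.image Nat.cast)) =
      (l.find? fun s => decide (s ∉ occ)).map Nat.cast := by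
  rw [List.find?_map]
  congr 1
  refine List.find?_congr fun q hq => ?_
  simp only [Function.comp_apply, natCast_mem_image_natCast_iff hocc (hl q hq)]

lemma map_range_natCast_sub {p j : ℕ} (hj : j ≤ p - 1) :
    (List.range j).map (fun i => (p : ZMod (n + 1)) - (i + 1 : ℕ)) =
      ((List.range j).map fun i => p - (i + 1)).map Nat.cast := by
  rw [List.map_map]
  refine List.map_congr_left fun i hi => ?_
  rw [List.mem_range] at hi
  simp [Nat.cast_sub (by omega : i + 1 ≤ p)]

lemma find?_map_range_natCast_sub (hocc : occ ⊆ Icc 1 n) {p : ℕ} (hp : p ∈ Icc 1 n) :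
    ((List.range k).map fun i => (p : ZMod (n + 1)) - (i + 1 : ℕ)).find?
        (fun s => decide (s ∉ occ.image Nat.cast)) =
      (((backwardCandidates k p).find? fun s => decide (s ∉ occ)).map Nat.cast).or
        (if p ≤ k then some 0 else none) := by
  have hbound : ∀ q ∈ backwardCandidates k p, q ≤ n := fun q hq => by
    have := mem_backwardCandidates.1 hq
    rw [mem_Icc] at hp
    omega
  rw [← find?_map_natCast hocc hbound, backwardCandidates_eq]
  rcases le_or_gt p k with hpk | hkp
  · obtain ⟨j, rfl⟩ : ∃ j, k = (p - 1) + (j + 1) := ⟨k - p, by rw [mem_Icc] at hp; omega⟩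
    have hzero : (p : ZMod (n + 1)) - ((p - 1 + 0 + 1 : ℕ) : ZMod (n + 1)) = 0 := by
      rw [show p - 1 + 0 + 1 = p by rw [mem_Icc] at hp; omega, sub_self]
    rw [min_eq_right (by omega), if_pos hpk, List.range_add, List.map_append, List.find?_append,
      map_range_natCast_sub le_rfl, List.range_succ_eq_map, List.map_cons, List.map_cons,
      List.find?_cons_of_pos] <;> simp only [hzero]
    simp [zero_notMem_image_natCast hocc]
  · rw [min_eq_left (by omega), if_neg (by omega), Option.or_none,
      map_range_natCast_sub (by omega)]

lemma find?_map_range_natCast_add (hocc : occ ⊆ Icc 1 n) {p : ℕ} (hp : p ∈ Icc 1 n)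
    (hpocc : p ∈ occ) :
    ((List.range n).map fun i => (p : ZMod (n + 1)) + (i + 1 : ℕ)).find?
        (fun s => decide (s ∉ occ.image Nat.cast)) =
      some (((forwardSpot n occ p).map Nat.cast).getD 0) := by
  rw [mem_Icc] at hp
  have hspot :
      forwardSpot n occ p = (List.range' (p + 1) (n - p)).find? fun s => decide (s ∉ occ) := by
    rw [forwardSpot, show n + 1 - p = n - p + 1 by omega, List.range'_succ,
      List.find?_cons_of_neg (by simpa using hpocc)]
  have hbound : ∀ q ∈ List.range' (p + 1) (n - p), q ≤ n := fun q hq => by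
    rw [List.mem_range'_1] at hq
    omega
  have hsplit :
      List.range n = List.range (n - p) ++ (List.range (p - 1 + 1)).map (n - p + ·) := by
    rw [← List.range_add, show n - p + (p - 1 + 1) = n by omega]
  have hwrap : (p : ZMod (n + 1)) + ((n - p + 0 + 1 : ℕ) : ZMod (n + 1)) = 0 := by
    rw [← Nat.cast_add, show p + (n - p + 0 + 1) = n + 1 by omega, ZMod.natCast_self]
  have hfirst : (List.range (n - p)).map (fun i => (p : ZMod (n + 1)) + (i + 1 : ℕ)) =
      (List.range' (p + 1) (n - p)).map Nat.cast := by
    rw [List.range'_eq_map_range, List.map_map]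
    exact List.map_congr_left fun i _ => by simp only [Function.comp_apply]; push_cast; ring
  rw [hsplit, List.map_append, List.find?_append, hfirst, find?_map_natCast hocc hbound,
    ← hspot, List.range_succ_eq_map, List.map_cons, List.map_cons, List.find?_cons_of_pos,
    Option.or_some] <;> simp only [hwrap]
  simp [zero_notMem_image_natCast hocc]

/-- Leaving the lot backwards past `1` or forwards past `n` is reaching `0` on the circle. -/
lemma circSpot_natCast (hocc : occ ⊆ Icc 1 n) {p : ℕ} (hp : p ∈ Icc 1 n) :
    circSpot n k (occ.image Nat.cast) p = ((containedStep n k occ p).map Nat.cast).getD 0 := by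
  have hpn := (mem_Icc.1 hp).2
  by_cases hpocc : p ∈ occ
  swap
  · have hstep : containedStep n k occ p = some p := by
      rw [containedStep, if_neg fun h => hpocc (h.2 (right_mem_Icc.2 (mem_Icc.1 hp).1)),
        naplesSpot, if_neg hpocc]
    rw [hstep, circSpot_of_notMem ((natCast_mem_image_natCast_iff hocc hpn).not.2 hpocc)]
    rfl
  rw [circSpot, circList,
    List.find?_cons_of_neg (by simpa [natCast_mem_image_natCast_iff hocc hpn]),
    List.find?_append, find?_map_range_natCast_sub hocc hp,
    find?_map_range_natCast_add hocc hp hpocc]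
  cases hback : (backwardCandidates k p).find? fun s => decide (s ∉ occ) with
  | some s =>
    have hs := mem_backwardCandidates.1 (List.mem_of_find?_eq_some hback)
    have hsocc : s ∉ occ := by simpa using List.find?_some hback
    have hstep : containedStep n k occ p = some s := by
      rw [containedStep, if_neg fun h => hsocc (h.2 (mem_Icc.2 ⟨hs.1, hs.2.1.le⟩)), naplesSpot,
        if_pos hpocc, hback]
    rw [hstep]
    rfl
  | none =>
    by_cases hpk : p ≤ k
    · have hfull : Icc 1 p ⊆ occ := fun s hs => by
        obtain ⟨hs₁, hs₂⟩ := mem_Icc.1 hs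
        obtain rfl | hsp := eq_or_lt_of_le hs₂
        · exact hpocc
        · have hs : s ∈ backwardCandidates k p :=
            mem_backwardCandidates.2 ⟨hs₁, hsp, by omega⟩
          simpa using List.find?_eq_none.1 hback s hs
      have hstep : containedStep n k occ p = none := if_pos ⟨hpk, hfull⟩
      rw [hstep, if_pos hpk]
      rfl
    · have hstep : containedStep n k occ p = forwardSpot n occ p := by
        rw [containedStep, if_neg fun h => hpk h.1, naplesSpot, if_pos hpocc, hback]
      rw [hstep, if_neg hpk]
      rfl

lemma naplesContainedAux_iff {l : List ℕ} (hl : ∀ p ∈ l, p ∈ Icc 1 n)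
    (hocc : occ ⊆ Icc 1 n) :
    naplesContainedAux n k l occ = true ↔
      (0 : ZMod (n + 1)) ∉ circRun n k (l.map Nat.cast) (occ.image Nat.cast) := by
  induction l generalizing occ with
  | nil => simpa [naplesContainedAux, circRun] using zero_notMem_image_natCast hocc
  | cons p rest ih =>
    have hp := hl p List.mem_cons_self
    rw [naplesContainedAux_cons, List.map_cons, circRun, circSpot_natCast hocc hp]
    cases hstep : containedStep n k occ p with
    | none =>
      simpa using subset_circRun _ _ (mem_insert_self _ _)
    | some s =>
      have hs := containedStep_mem_Icc hp hstep
      rw [Option.map_some, Option.getD_some, Option.map_some, Option.getD_some, ← image_insert]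
      exact ih (fun q hq => hl q (List.mem_cons_of_mem _ hq)) (insert_subset hs hocc)

end CastToCircle

lemma card_filter_zero_notMem_circRun {m n : ℕ} (k : ℕ) (hm : 1 ≤ m) (hmn : m ≤ n) :
    #{f : Fin m → ZMod (n + 1) | (0 : ZMod (n + 1)) ∉ circRun n k (List.ofFn f) ∅} =
      (n - m + 1) * (n + 1) ^ (m - 1) := by
  have hpollak := card_filter_zero_notMem_mul_card (fun f : Fin m → ZMod (n + 1) =>
      circRun n k (List.ofFn f) ∅) (r := m)
    (fun f c => by
      have h := circRun_add (k := k) (List.ofFn f) ∅ c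
      rwa [image_empty, List.map_ofFn] at h)
    (fun f => by rw [card_circRun _ _ (by simp; omega), card_empty, List.length_ofFn, zero_add])
  rw [ZMod.card, Fintype.card_fin, show n + 1 - m = n - m + 1 by omega,
    show (n + 1) ^ m = (n + 1) ^ (m - 1) * (n + 1) by rw [← pow_succ, Nat.sub_add_cancel hm],
    ← mul_assoc] at hpollak
  exact Nat.eq_of_mul_eq_mul_right (Nat.succ_pos n) hpollak

lemma prefList_eq_ofFn {m n : ℕ} (a : Fin m → Fin n) :
    prefList a = List.ofFn fun i => (a i : ℕ) + 1 := by
  change List.map _ ((List.ofFn a).flatMap (pure ∘ Fin.val)) = _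
  rw [List.flatMap_pure_eq_map, List.map_map, List.map_ofFn]
  rfl

lemma mem_Icc_of_mem_prefList {m n : ℕ} {a : Fin m → Fin n} {p : ℕ} (hp : p ∈ prefList a) :
    p ∈ Icc 1 n := by
  obtain ⟨i, rfl⟩ := List.mem_ofFn.1 (prefList_eq_ofFn a ▸ hp)
  simp [(a i).isLt]

def toCircle {n : ℕ} (x : Fin n) : ZMod (n + 1) := ((x : ℕ) + 1 : ℕ)

lemma toCircle_injective {n : ℕ} : Function.Injective (toCircle (n := n)) := fun x y h => by
  rw [toCircle, toCircle, ZMod.natCast_eq_natCast_iff', Nat.mod_eq_of_lt (by omega),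
    Nat.mod_eq_of_lt (by omega)] at h
  exact Fin.ext (by omega)

lemma exists_toCircle_eq {n : ℕ} {y : ZMod (n + 1)} (hy : y ≠ 0) :
    ∃ x : Fin n, toCircle x = y := by
  have hval : y.val ≠ 0 := (ZMod.val_ne_zero y).2 hy
  refine ⟨⟨y.val - 1, by have := ZMod.val_lt y; omega⟩, ?_⟩
  rw [toCircle, Fin.val_mk, Nat.sub_add_cancel (Nat.one_le_iff_ne_zero.2 hval),
    ZMod.natCast_zmod_val]

lemma mem_Bset_iff {m n : ℕ} (k : ℕ) (a : Fin m → Fin n) :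
    a ∈ Bset m n k ↔ (0 : ZMod (n + 1)) ∉ circRun n k (List.ofFn (toCircle ∘ a)) ∅ := by
  rw [Bset, mem_filter, naplesContainedAux_iff (fun _ => mem_Icc_of_mem_prefList) (empty_subset _),
    image_empty, prefList_eq_ofFn, List.map_ofFn]
  exact and_iff_right (mem_univ a)

lemma card_Bset_eq (m n k : ℕ) :
    #(Bset m n k) =
      #{f : Fin m → ZMod (n + 1) | (0 : ZMod (n + 1)) ∉ circRun n k (List.ofFn f) ∅} := by
  refine card_nbij (toCircle ∘ ·) (fun a ha => ?_) toCircle_injective.comp_left.injOn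
    (fun f hf => ?_)
  · simpa using (mem_Bset_iff k a).1 ha
  · have hf : (0 : ZMod (n + 1)) ∉ circRun n k (List.ofFn f) ∅ := by simpa using hf
    have hne (i : Fin m) : f i ≠ 0 := fun h =>
      hf (mem_circRun_of_mem (List.mem_ofFn.2 ⟨i, h⟩) ∅)
    choose a ha using fun i => exists_toCircle_eq (hne i)
    exact ⟨a, (mem_Bset_iff k a).2 (by rwa [show toCircle ∘ a = f from funext ha]), funext ha⟩

lemma containedStep_zero {n : ℕ} (occ : Finset ℕ) {p : ℕ} (hp : p ∈ Icc 1 n) :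
    containedStep n 0 occ p = forwardSpot n occ p := by
  obtain ⟨hp₁, hpn⟩ := mem_Icc.1 hp
  rw [containedStep, if_neg (by omega), naplesSpot]
  split_ifs with hpocc
  · rfl
  · rw [forwardSpot, show n + 1 - p = n - p + 1 by omega, List.range'_succ,
      List.find?_cons_of_pos (by simpa using hpocc)]

lemma naplesContainedAux_zero {n : ℕ} {l : List ℕ} (hl : ∀ p ∈ l, p ∈ Icc 1 n)
    (occ : Finset ℕ) :
    naplesContainedAux n 0 l occ = (classicalPark n l occ).isSome := by
  induction l generalizing occ with
  | nil => rfl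
  | cons p rest ih =>
    rw [naplesContainedAux_cons, containedStep_zero occ (hl p List.mem_cons_self), classicalPark]
    cases forwardSpot n occ p with
    | none => rfl
    | some s => exact ih (fun q hq => hl q (List.mem_cons_of_mem _ hq)) _

lemma PFset_eq_Bset_zero (m n : ℕ) : PFset m n = Bset m n 0 := by
  ext a
  rw [PFset, Bset, mem_filter, mem_filter, naplesContainedAux_zero fun _ => mem_Icc_of_mem_prefList]

theorem contained_bijection_general (m n k : ℕ) (hm : 1 ≤ m) (hmn : m ≤ n) :
    Nonempty ({a // a ∈ Bset m n k} ≃ {a // a ∈ PFset m n}) ∧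
      (Bset m n k).card = (n - m + 1) * (n + 1) ^ (m - 1) := by
  have hcard (j : ℕ) : #(Bset m n j) = (n - m + 1) * (n + 1) ^ (m - 1) := by
    rw [card_Bset_eq, card_filter_zero_notMem_circRun j hm hmn]
  exact ⟨⟨equivOfCardEq (by rw [PFset_eq_Bset_zero, hcard, hcard])⟩, hcard k⟩

theorem contained_bijection (m n k : ℕ) (hm : 1 ≤ m) (hmn : m ≤ n) (hk : k ≤ n - 1) :
    Nonempty ({a // a ∈ Bset m n k} ≃ {a // a ∈ PFset m n}) ∧
      (Bset m n k).card = (n - m + 1) * (n + 1) ^ (m - 1) :=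
  contained_bijection_general m n k hm hmn
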